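/- arXiv:2012.04530 — 5 statements merged into one kernel-verified Lean document; each statement's English description precedes it below -/
import Mathlib

section
/- If Q and R are mutually polar retractions on a Banach space X (i.e., Q and R are continuous positively homogeneous idempotent maps whose ranges are nonzero closed convex cones, mapping points outside their range to the boundary of their range, with Q + R = I and QR = RQ = 0) and the range of Q has nonempty interior, then there exists a nonzero vector u lying in both the range of R and the negative of the interior of the range of Q; in particular the span of u is a transversal line for the ranges of Q and R. -/
open Set

variable {X : Type*} [NormedAddCommGroup X] [NormedSpace ℝ X]

/-- A retraction: continuous, positively homogeneous, idempotent map whose range is a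
nonzero closed convex cone, mapping points outside the range to the boundary of the range. -/
def IsRetraction (T : X → X) : Prop :=
  Continuous T ∧
  (∀ t : ℝ, 0 ≤ t → ∀ x, T (t • x) = t • T x) ∧
  (∀ x, T (T x) = T x) ∧
  Set.range T ≠ {0} ∧
  IsClosed (Set.range T) ∧
  Convex ℝ (Set.range T) ∧
  (∀ t : ℝ, 0 ≤ t → ∀ y ∈ Set.range T, t • y ∈ Set.range T) ∧
  (∀ x, x ∉ Set.range T → T x ∈ frontier (Set.range T))

/-- Mutually polar retractions: Q + R = I and QR = RQ = 0. -/
def MutuallyPolar (Q R : X → X) : Prop :=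
  IsRetraction Q ∧ IsRetraction R ∧
  (∀ x, Q x + R x = x) ∧ (∀ x, Q (R x) = 0) ∧ (∀ x, R (Q x) = 0)

/-- M and N are transversal with transversal line Δ. -/
def TransversalWith (M N : Set X) (Δ : Submodule ℝ X) : Prop :=
  M ∩ N = {0} ∧
  (∃ d : X, d ≠ 0 ∧ Δ = Submodule.span ℝ {d}) ∧
  ((Δ : Set X) ∩ (M \ {0})).Nonempty ∧
  ((Δ : Set X) ∩ (N \ {0})).Nonempty ∧
  ((Δ : Set X) ∩ (interior M ∪ interior N)).Nonempty

/-- M and N are transversal cones. -/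
def Transversal (M N : Set X) : Prop := ∃ Δ : Submodule ℝ X, TransversalWith M N Δ

/-! The range `M` of `Q` is a convex cone, so `M + M ⊆ M` and hence `interior M + M ⊆ interior M`.
For `a ∈ interior M` put `u := R (-a)`; then `-u = a + Q (-a) ∈ interior M`. If `u = 0`, then
`-a = Q (-a) ∈ M`, so `0 = a + -a ∈ interior M`, and a cone that is a neighbourhood of `0` is the
whole space, contradicting `M ∩ range R = {0}` with `range R ≠ {0}`. -/

open Filter Topology Pointwise

section Cone

variable {E : Type*} [AddCommGroup E] {C : Set E}

theorem Convex.add_mem_of_smul_mem {𝕜 : Type*} [Field 𝕜] [LinearOrder 𝕜] [IsStrictOrderedRing 𝕜]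
    [Module 𝕜 E] (hconv : Convex 𝕜 C) (hcone : ∀ t : 𝕜, 0 ≤ t → ∀ y ∈ C, t • y ∈ C)
    {x y : E} (hx : x ∈ C) (hy : y ∈ C) : x + y ∈ C := by
  have hsum : x + y ∈ (2 : 𝕜) • C := by
    rw [← one_add_one_eq_two, hconv.add_smul zero_le_one zero_le_one, one_smul]
    exact add_mem_add hx hy
  obtain ⟨z, hz, hzxy⟩ := hsum
  exact hzxy ▸ hcone 2 zero_le_two z hz

theorem Convex.add_subset_of_smul_mem {𝕜 : Type*} [Field 𝕜] [LinearOrder 𝕜]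
    [IsStrictOrderedRing 𝕜] [Module 𝕜 E] (hconv : Convex 𝕜 C)
    (hcone : ∀ t : 𝕜, 0 ≤ t → ∀ y ∈ C, t • y ∈ C) : C + C ⊆ C :=
  fun _ ⟨_, hx, _, hy, hxy⟩ ↦ hxy ▸ hconv.add_mem_of_smul_mem hcone hx hy

variable [TopologicalSpace E]

theorem add_mem_interior_of_add_subset [IsTopologicalAddGroup E] (hadd : C + C ⊆ C) {a m : E}
    (ha : a ∈ interior C) (hm : m ∈ C) : a + m ∈ interior C :=
  interior_mono hadd (subset_interior_add_left (add_mem_add ha hm))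

theorem eq_univ_of_zero_mem_interior [Module ℝ E] [ContinuousSMul ℝ E]
    (hcone : ∀ t : ℝ, 0 ≤ t → ∀ y ∈ C, t • y ∈ C) (h0 : (0 : E) ∈ interior C) : C = univ := by
  refine eq_univ_of_forall fun x ↦ ?_
  have hlim : Tendsto (fun t : ℝ ↦ t • x) (𝓝 0) (𝓝 0) := by
    simpa using (tendsto_id (x := 𝓝 (0 : ℝ))).smul_const x
  obtain ⟨t, htx, ht⟩ :=
    (((hlim.mono_left (nhdsWithin_le_nhds (s := Ioi 0))).eventually_mem
      (mem_interior_iff_mem_nhds.mp h0)).and self_mem_nhdsWithin).exists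
  simpa [smul_smul, inv_mul_cancel₀ (ne_of_gt ht)] using hcone t⁻¹ (inv_nonneg.mpr ht.le) _ htx

theorem neg_notMem_of_mem_interior [Module ℝ E] [IsTopologicalAddGroup E] [ContinuousSMul ℝ E]
    (hconv : Convex ℝ C) (hcone : ∀ t : ℝ, 0 ≤ t → ∀ y ∈ C, t • y ∈ C) (hC : C ≠ univ)
    {a : E} (ha : a ∈ interior C) : -a ∉ C := fun hna ↦
  hC <| eq_univ_of_zero_mem_interior hcone <| by
    simpa using add_mem_interior_of_add_subset (hconv.add_subset_of_smul_mem hcone) ha hna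

end Cone

theorem transversalWith_span_singleton {M N : Set X} (hMN : M ∩ N = {0}) {u : X} (hu : u ≠ 0)
    (huN : u ∈ N) (hnegu : -u ∈ interior M) : TransversalWith M N (Submodule.span ℝ {u}) := by
  have hmem : u ∈ Submodule.span ℝ {u} := Submodule.mem_span_singleton_self u
  have hneg : -u ∈ Submodule.span ℝ {u} := Submodule.neg_mem _ hmem
  exact ⟨hMN, ⟨u, hu, rfl⟩, ⟨-u, hneg, interior_subset hnegu, neg_ne_zero.mpr hu⟩,
    ⟨u, hmem, huN, hu⟩, ⟨-u, hneg, Or.inl hnegu⟩⟩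

namespace IsRetraction

variable {T : X → X}

theorem apply_apply (hT : IsRetraction T) (x : X) : T (T x) = T x := hT.2.2.1 x

theorem range_ne_zero (hT : IsRetraction T) : range T ≠ {0} := hT.2.2.2.1

theorem convex_range (hT : IsRetraction T) : Convex ℝ (range T) := hT.2.2.2.2.2.1

theorem smul_mem_range (hT : IsRetraction T) :
    ∀ t : ℝ, 0 ≤ t → ∀ y ∈ range T, t • y ∈ range T :=
  hT.2.2.2.2.2.2.1

theorem add_range_subset (hT : IsRetraction T) : range T + range T ⊆ range T :=
  hT.convex_range.add_subset_of_smul_mem hT.smul_mem_range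

end IsRetraction

namespace MutuallyPolar

variable {Q R : X → X}

theorem isRetraction_left (h : MutuallyPolar Q R) : IsRetraction Q := h.1

theorem isRetraction_right (h : MutuallyPolar Q R) : IsRetraction R := h.2.1

theorem add_apply (h : MutuallyPolar Q R) (x : X) : Q x + R x = x := h.2.2.1 x

theorem left_apply_right (h : MutuallyPolar Q R) (x : X) : Q (R x) = 0 := h.2.2.2.1 x

theorem right_apply_left (h : MutuallyPolar Q R) (x : X) : R (Q x) = 0 := h.2.2.2.2 x

theorem range_inter_range (h : MutuallyPolar Q R) : range Q ∩ range R = {0} := by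
  refine Subset.antisymm ?_
    (singleton_subset_iff.mpr ⟨⟨R 0, h.left_apply_right 0⟩, ⟨Q 0, h.right_apply_left 0⟩⟩)
  rintro _ ⟨⟨x, rfl⟩, ⟨y, hy⟩⟩
  have hQR := h.left_apply_right (R y)
  rwa [h.isRetraction_right.apply_apply, hy, h.isRetraction_left.apply_apply] at hQR

theorem range_left_ne_univ (h : MutuallyPolar Q R) : range Q ≠ univ := by
  obtain ⟨v, hvR, hv0⟩ : ∃ v ∈ range R, v ≠ 0 := by
    by_contra! hc
    exact h.isRetraction_right.range_ne_zero
      (Subset.antisymm hc (singleton_subset_iff.mpr ⟨Q 0, h.right_apply_left 0⟩))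
  intro hQ
  have hv : v ∈ range Q ∩ range R := ⟨hQ ▸ mem_univ v, hvR⟩
  exact hv0 (by simpa [h.range_inter_range] using hv)

theorem neg_notMem_range_left (h : MutuallyPolar Q R) {a : X} (ha : a ∈ interior (range Q)) :
    -a ∉ range Q :=
  neg_notMem_of_mem_interior h.isRetraction_left.convex_range h.isRetraction_left.smul_mem_range
    h.range_left_ne_univ ha

end MutuallyPolar

theorem stmt0_general (Q R : X → X) (h : MutuallyPolar Q R)
    (hM : (interior (Set.range Q)).Nonempty) :
    ∃ u : X, u ≠ 0 ∧ u ∈ Set.range R ∧ -u ∈ interior (Set.range Q) ∧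
      TransversalWith (Set.range Q) (Set.range R) (Submodule.span ℝ {u}) := by
  obtain ⟨a, ha⟩ := hM
  have hsum : Q (-a) + R (-a) = -a := h.add_apply (-a)
  have hdecomp : -R (-a) = a + Q (-a) := by
    rw [eq_sub_of_add_eq' hsum]
    abel
  have hu : R (-a) ≠ 0 := fun hu ↦
    h.neg_notMem_range_left ha ⟨-a, by simpa [hu] using hsum⟩
  have hnegu : -R (-a) ∈ interior (range Q) := hdecomp ▸
    add_mem_interior_of_add_subset h.isRetraction_left.add_range_subset ha (mem_range_self _)
  exact ⟨R (-a), hu, mem_range_self _, hnegu,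
    transversalWith_span_singleton h.range_inter_range hu (mem_range_self _) hnegu⟩

theorem stmt0 [CompleteSpace X] (Q R : X → X) (h : MutuallyPolar Q R)
    (hM : (interior (Set.range Q)).Nonempty) :
    ∃ u : X, u ≠ 0 ∧ u ∈ Set.range R ∧ -u ∈ interior (Set.range Q) ∧
      TransversalWith (Set.range Q) (Set.range R) (Submodule.span ℝ {u}) :=
  stmt0_general Q R h hM
end

section
/- In ℝ², let e₁, e₂, u₁, u₂ be nonzero vectors lying in the open first, second, third, and fourth quadrants respectively, and set K₁ = cone{e₁,e₂}, K₂ = cone{e₂,u₁}, K₃ = cone{u₁,u₂}, K₄ = cone{u₂,e₁}. Define Q by Qx = x on K₁, Qx = λe₁ for x = λe₁ + μu₂ ∈ K₄, Qx = λe₂ for x = λe₂ + μu₁ ∈ K₂, and Qx = 0 on K₃; define R = I − Q. Then Q and R are mutually polar retractions with ranges K₁ and K₃ respectively. -/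
open Set

variable {X : Type*} [NormedAddCommGroup X] [NormedSpace ℝ X]

/-- The cone generated by two vectors: `{s • v + t • w : 0 ≤ s, 0 ≤ t}`. -/
def cone2 (v w : ℝ × ℝ) : Set (ℝ × ℝ) :=
  {x | ∃ s t : ℝ, 0 ≤ s ∧ 0 ≤ t ∧ x = s • v + t • w}

/-!
The cones `K₁, K₂, K₃, K₄` are consecutive sectors of a fan around the origin, so they cover the
plane, and on each of them `Q` is the restriction of a linear map. Pasting along these closed sets
gives continuity, and positive homogeneity is read off sector by sector. The images of `K₂`, `K₃`,
`K₄` are an edge of `K₁`, the origin and the other edge of `K₁`, which is the frontier condition.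
Finally `I - Q` has exactly the same shape with respect to the same fan started at `u₁`, so one
argument yields both retractions.
-/

open Filter Topology

def cross (v w : ℝ × ℝ) : ℝ := v.1 * w.2 - v.2 * w.1

lemma cross_swap (v w : ℝ × ℝ) : cross w v = -cross v w := by
  simp only [cross]; ring

lemma cross_neg_right (v x : ℝ × ℝ) : cross v (-x) = -cross v x := by
  simp only [cross, Prod.fst_neg, Prod.snd_neg]; ring

lemma cross_smul_add_smul_left (v w : ℝ × ℝ) (l m : ℝ) :
    cross (l • v + m • w) w = l * cross v w := by
  simp only [cross, Prod.fst_add, Prod.snd_add, Prod.smul_fst, Prod.smul_snd, smul_eq_mul]; ring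

lemma cross_smul_add_smul_right (v w : ℝ × ℝ) (l m : ℝ) :
    cross v (l • v + m • w) = m * cross v w := by
  simp only [cross, Prod.fst_add, Prod.snd_add, Prod.smul_fst, Prod.smul_snd, smul_eq_mul]; ring

lemma eq_cross_div_smul_add {v w : ℝ × ℝ} (h : cross v w ≠ 0) (x : ℝ × ℝ) :
    x = (cross x w / cross v w) • v + (cross v x / cross v w) • w := by
  have hcramer : cross v w • x = cross x w • v + cross v x • w := by
    ext <;> simp only [cross, Prod.fst_add, Prod.snd_add, Prod.smul_fst, Prod.smul_snd,
      smul_eq_mul] <;> ring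
  rw [div_eq_inv_mul, div_eq_inv_mul, mul_smul, mul_smul, ← smul_add, ← hcramer,
    inv_smul_smul₀ h]

lemma cone2_comm (v w : ℝ × ℝ) : cone2 v w = cone2 w v := by
  ext x
  constructor <;> rintro ⟨s, t, hs, ht, rfl⟩ <;> exact ⟨t, s, ht, hs, add_comm _ _⟩

lemma mem_cone2_iff {v w x : ℝ × ℝ} (h : cross v w ≠ 0) :
    x ∈ cone2 v w ↔ 0 ≤ cross x w / cross v w ∧ 0 ≤ cross v x / cross v w := by
  constructor
  · rintro ⟨s, t, hs, ht, rfl⟩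
    rw [cross_smul_add_smul_left, cross_smul_add_smul_right, mul_div_cancel_right₀ _ h,
      mul_div_cancel_right₀ _ h]
    exact ⟨hs, ht⟩
  · rintro ⟨hs, ht⟩
    exact ⟨_, _, hs, ht, eq_cross_div_smul_add h x⟩

lemma mem_cone2_iff_of_cross_pos {v w x : ℝ × ℝ} (h : 0 < cross v w) :
    x ∈ cone2 v w ↔ 0 ≤ cross x w ∧ 0 ≤ cross v x := by
  rw [mem_cone2_iff h.ne', le_div_iff₀ h, le_div_iff₀ h, zero_mul]

lemma zero_mem_cone2 (v w : ℝ × ℝ) : (0 : ℝ × ℝ) ∈ cone2 v w :=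
  ⟨0, 0, le_rfl, le_rfl, by simp⟩

lemma left_mem_cone2 (v w : ℝ × ℝ) : v ∈ cone2 v w :=
  ⟨1, 0, zero_le_one, le_rfl, by simp⟩

lemma right_mem_cone2 (v w : ℝ × ℝ) : w ∈ cone2 v w :=
  ⟨0, 1, le_rfl, zero_le_one, by simp⟩

lemma add_mem_cone2 {v w x y : ℝ × ℝ} (hx : x ∈ cone2 v w) (hy : y ∈ cone2 v w) :
    x + y ∈ cone2 v w := by
  obtain ⟨s, t, hs, ht, rfl⟩ := hx
  obtain ⟨s', t', hs', ht', rfl⟩ := hy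
  exact ⟨s + s', t + t', by positivity, by positivity, by module⟩

lemma smul_mem_cone2 {v w x : ℝ × ℝ} {t : ℝ} (ht : 0 ≤ t) (hx : x ∈ cone2 v w) :
    t • x ∈ cone2 v w := by
  obtain ⟨s, r, hs, hr, rfl⟩ := hx
  exact ⟨t * s, t * r, by positivity, by positivity, by module⟩

lemma convex_cone2 (v w : ℝ × ℝ) : Convex ℝ (cone2 v w) :=
  fun _ hx _ hy _ _ ha hb _ => add_mem_cone2 (smul_mem_cone2 ha hx) (smul_mem_cone2 hb hy)

lemma isClosed_cone2 {v w : ℝ × ℝ} (h : cross v w ≠ 0) : IsClosed (cone2 v w) := by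
  have hset : cone2 v w = {x | 0 ≤ cross x w / cross v w} ∩ {x | 0 ≤ cross v x / cross v w} := by
    ext x; exact mem_cone2_iff h
  rw [hset]
  exact (isClosed_le continuous_const (by unfold cross; fun_prop)).inter
    (isClosed_le continuous_const (by unfold cross; fun_prop))

lemma smul_left_mem_frontier_cone2 {v w : ℝ × ℝ} (h : cross v w ≠ 0) {l : ℝ} (hl : 0 ≤ l) :
    l • v ∈ frontier (cone2 v w) := by
  rw [frontier_eq_closure_inter_closure]
  refine ⟨subset_closure ⟨l, 0, hl, le_rfl, by simp⟩, ?_⟩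
  have hlim : Tendsto (fun t : ℝ => l • v + (-t) • w) (𝓝[>] 0) (𝓝 (l • v)) := by
    have hc : Continuous fun t : ℝ => l • v + (-t) • w := by fun_prop
    simpa using (hc.tendsto 0).mono_left nhdsWithin_le_nhds
  refine mem_closure_of_tendsto hlim (eventually_nhdsWithin_of_forall fun t ht hmem => ?_)
  have := ((mem_cone2_iff h).1 hmem).2
  rw [cross_smul_add_smul_right, mul_div_cancel_right₀ _ h] at this
  exact absurd this (by simpa using ht)

lemma smul_right_mem_frontier_cone2 {v w : ℝ × ℝ} (h : cross v w ≠ 0) {m : ℝ} (hm : 0 ≤ m) :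
    m • w ∈ frontier (cone2 v w) := by
  rw [cone2_comm]
  exact smul_left_mem_frontier_cone2 (by rwa [cross_swap, neg_ne_zero]) hm

/-- `⟪v, x⟫ / cross v x` is the cotangent of the angle from `v` to `x`, which increases as `v`
turns counterclockwise. -/
lemma div_lt_div_of_cross_pos {p q x : ℝ × ℝ} (hp : 0 < cross p x) (hq : 0 < cross q x)
    (hpq : 0 < cross p q) :
    (p.1 * x.1 + p.2 * x.2) / cross p x < (q.1 * x.1 + q.2 * x.2) / cross q x := by
  have hx : 0 < x.1 ^ 2 + x.2 ^ 2 := by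
    by_contra! h0
    have h1 : x.1 = 0 := by nlinarith
    have h2 : x.2 = 0 := by nlinarith
    simp [cross, h1, h2] at hp
  have hlagrange : cross p q * (x.1 ^ 2 + x.2 ^ 2) =
      cross p x * (q.1 * x.1 + q.2 * x.2) - (p.1 * x.1 + p.2 * x.2) * cross q x := by
    simp only [cross]; ring
  rw [div_lt_div_iff₀ hp hq]
  nlinarith [mul_pos hpq hx]

lemma not_forall_cross_pos {a b c d x : ℝ × ℝ} (hab : 0 < cross a b) (hbc : 0 < cross b c)
    (hcd : 0 < cross c d) (hda : 0 < cross d a) :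
    ¬ (0 < cross a x ∧ 0 < cross b x ∧ 0 < cross c x ∧ 0 < cross d x) := by
  rintro ⟨ha, hb, hc, hd⟩
  have := div_lt_div_of_cross_pos ha hb hab
  have := div_lt_div_of_cross_pos hb hc hbc
  have := div_lt_div_of_cross_pos hc hd hcd
  have := div_lt_div_of_cross_pos hd ha hda
  linarith

lemma mem_cone2_of_cross_cyclic {a b c d : ℝ × ℝ} (hab : 0 < cross a b) (hbc : 0 < cross b c)
    (hcd : 0 < cross c d) (hda : 0 < cross d a) (x : ℝ × ℝ) :
    x ∈ cone2 a b ∨ x ∈ cone2 b c ∨ x ∈ cone2 c d ∨ x ∈ cone2 d a := by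
  simp only [mem_cone2_iff_of_cross_pos hab, mem_cone2_iff_of_cross_pos hbc,
    mem_cone2_iff_of_cross_pos hcd, mem_cone2_iff_of_cross_pos hda, cross_swap _ x]
  by_contra!
  -- going around the cycle, the four values `cross · x` are then all positive or all negative
  rcases le_or_gt 0 (cross a x) with ha | ha
  · exact not_forall_cross_pos hab hbc hcd hda (x := x) (by grind)
  · exact not_forall_cross_pos hab hbc hcd hda (x := -x) (by simp only [cross_neg_right]; grind)

def IsLinearOnCone2 (T : ℝ × ℝ → ℝ × ℝ) (v w a b : ℝ × ℝ) : Prop :=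
  ∀ l m : ℝ, 0 ≤ l → 0 ≤ m → T (l • v + m • w) = l • a + m • b

namespace IsLinearOnCone2

variable {T : ℝ × ℝ → ℝ × ℝ} {v w a b : ℝ × ℝ}

lemma eqOn (hT : IsLinearOnCone2 T v w a b) (h : cross v w ≠ 0) :
    EqOn T (fun x => (cross x w / cross v w) • a + (cross v x / cross v w) • b) (cone2 v w) := by
  rintro _ ⟨l, m, hl, hm, rfl⟩
  simp only [hT l m hl hm, cross_smul_add_smul_left, cross_smul_add_smul_right,
    mul_div_cancel_right₀ _ h]

lemma continuousOn (hT : IsLinearOnCone2 T v w a b) (h : cross v w ≠ 0) :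
    ContinuousOn T (cone2 v w) := by
  refine ContinuousOn.congr ?_ (hT.eqOn h)
  unfold cross
  fun_prop

lemma map_smul (hT : IsLinearOnCone2 T v w a b) {t : ℝ} (ht : 0 ≤ t) {x : ℝ × ℝ}
    (hx : x ∈ cone2 v w) : T (t • x) = t • T x := by
  obtain ⟨l, m, hl, hm, rfl⟩ := hx
  rw [hT l m hl hm, smul_add, smul_smul, smul_smul,
    hT (t * l) (t * m) (mul_nonneg ht hl) (mul_nonneg ht hm), smul_add, smul_smul, smul_smul]

lemma mem_cone2 (hT : IsLinearOnCone2 T v w a b) {p q x : ℝ × ℝ} (hx : x ∈ cone2 v w)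
    (ha : a ∈ cone2 p q) (hb : b ∈ cone2 p q) : T x ∈ cone2 p q := by
  obtain ⟨l, m, hl, hm, rfl⟩ := hx
  rw [hT l m hl hm]
  exact add_mem_cone2 (smul_mem_cone2 hl ha) (smul_mem_cone2 hm hb)

end IsLinearOnCone2

lemma range_eq_of_mem_of_eq_self {α : Type*} {C : Set α} {T : α → α} (hmaps : ∀ x, T x ∈ C)
    (hfix : ∀ x ∈ C, T x = x) : range T = C :=
  (range_subset_iff.2 hmaps).antisymm fun y hy => ⟨y, hfix y hy⟩

lemma isRetraction_of_cone2 {T : ℝ × ℝ → ℝ × ℝ} {p q : ℝ × ℝ} (hpq : cross p q ≠ 0)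
    (hcont : Continuous T) (hhom : ∀ t : ℝ, 0 ≤ t → ∀ x, T (t • x) = t • T x)
    (hmaps : ∀ x, T x ∈ cone2 p q) (hfix : ∀ x ∈ cone2 p q, T x = x)
    (hfront : ∀ x ∉ cone2 p q, T x ∈ frontier (cone2 p q)) : IsRetraction T := by
  have hrange := range_eq_of_mem_of_eq_self hmaps hfix
  have hp : p ≠ 0 := by
    rintro rfl
    simp [cross] at hpq
  refine ⟨hcont, hhom, fun x => hfix _ (hmaps x), ?_, ?_, ?_, ?_, ?_⟩ <;> rw [hrange]
  · exact fun h => hp (by simpa [h] using left_mem_cone2 p q)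
  · exact isClosed_cone2 hpq
  · exact convex_cone2 p q
  · exact fun t ht y hy => smul_mem_cone2 ht hy
  · exact hfront

structure IsFanRetraction (T : ℝ × ℝ → ℝ × ℝ) (e₁ e₂ u₁ u₂ : ℝ × ℝ) : Prop where
  cross_pos₁₂ : 0 < cross e₁ e₂
  cross_pos₂₃ : 0 < cross e₂ u₁
  cross_pos₃₄ : 0 < cross u₁ u₂
  cross_pos₄₁ : 0 < cross u₂ e₁
  linearOn₁ : IsLinearOnCone2 T e₁ e₂ e₁ e₂
  linearOn₂ : IsLinearOnCone2 T e₂ u₁ e₂ 0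
  linearOn₃ : IsLinearOnCone2 T u₁ u₂ 0 0
  linearOn₄ : IsLinearOnCone2 T u₂ e₁ 0 e₁

namespace IsFanRetraction

variable {T : ℝ × ℝ → ℝ × ℝ} {e₁ e₂ u₁ u₂ : ℝ × ℝ}

lemma mem_cone2_cases (hT : IsFanRetraction T e₁ e₂ u₁ u₂) (x : ℝ × ℝ) :
    x ∈ cone2 e₁ e₂ ∨ x ∈ cone2 e₂ u₁ ∨ x ∈ cone2 u₁ u₂ ∨ x ∈ cone2 u₂ e₁ :=
  mem_cone2_of_cross_cyclic hT.cross_pos₁₂ hT.cross_pos₂₃ hT.cross_pos₃₄ hT.cross_pos₄₁ x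

lemma continuous (hT : IsFanRetraction T e₁ e₂ u₁ u₂) : Continuous T := by
  have hcover : cone2 e₁ e₂ ∪ cone2 e₂ u₁ ∪ cone2 u₁ u₂ ∪ cone2 u₂ e₁ = univ :=
    eq_univ_of_forall fun x => by have := hT.mem_cone2_cases x; simp only [mem_union]; tauto
  have h₁ := isClosed_cone2 hT.cross_pos₁₂.ne'
  have h₂ := isClosed_cone2 hT.cross_pos₂₃.ne'
  have h₃ := isClosed_cone2 hT.cross_pos₃₄.ne'
  have h₄ := isClosed_cone2 hT.cross_pos₄₁.ne'
  rw [← continuousOn_univ, ← hcover]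
  exact (((hT.linearOn₁.continuousOn hT.cross_pos₁₂.ne').union_of_isClosed
    (hT.linearOn₂.continuousOn hT.cross_pos₂₃.ne') h₁ h₂).union_of_isClosed
    (hT.linearOn₃.continuousOn hT.cross_pos₃₄.ne') (h₁.union h₂) h₃).union_of_isClosed
    (hT.linearOn₄.continuousOn hT.cross_pos₄₁.ne') ((h₁.union h₂).union h₃) h₄

lemma map_smul (hT : IsFanRetraction T e₁ e₂ u₁ u₂) {t : ℝ} (ht : 0 ≤ t) (x : ℝ × ℝ) :
    T (t • x) = t • T x := by
  rcases hT.mem_cone2_cases x with hx | hx | hx | hx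
  exacts [hT.linearOn₁.map_smul ht hx, hT.linearOn₂.map_smul ht hx,
    hT.linearOn₃.map_smul ht hx, hT.linearOn₄.map_smul ht hx]

lemma mem_cone2 (hT : IsFanRetraction T e₁ e₂ u₁ u₂) (x : ℝ × ℝ) : T x ∈ cone2 e₁ e₂ := by
  have h₁ := left_mem_cone2 e₁ e₂
  have h₂ := right_mem_cone2 e₁ e₂
  have h₀ := zero_mem_cone2 e₁ e₂
  rcases hT.mem_cone2_cases x with hx | hx | hx | hx
  exacts [hT.linearOn₁.mem_cone2 hx h₁ h₂, hT.linearOn₂.mem_cone2 hx h₂ h₀,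
    hT.linearOn₃.mem_cone2 hx h₀ h₀, hT.linearOn₄.mem_cone2 hx h₀ h₁]

lemma map_eq_self (hT : IsFanRetraction T e₁ e₂ u₁ u₂) {x : ℝ × ℝ} (hx : x ∈ cone2 e₁ e₂) :
    T x = x := by
  obtain ⟨l, m, hl, hm, rfl⟩ := hx
  exact hT.linearOn₁ l m hl hm

lemma mem_frontier (hT : IsFanRetraction T e₁ e₂ u₁ u₂) {x : ℝ × ℝ} (hx : x ∉ cone2 e₁ e₂) :
    T x ∈ frontier (cone2 e₁ e₂) := by
  have h := hT.cross_pos₁₂.ne'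
  rcases hT.mem_cone2_cases x with hx' | ⟨l, m, hl, hm, rfl⟩ | ⟨l, m, hl, hm, rfl⟩ |
    ⟨l, m, hl, hm, rfl⟩
  · exact absurd hx' hx
  · simpa [hT.linearOn₂ l m hl hm] using smul_right_mem_frontier_cone2 h hl
  · simpa [hT.linearOn₃ l m hl hm] using smul_left_mem_frontier_cone2 h le_rfl (l := 0)
  · simpa [hT.linearOn₄ l m hl hm] using smul_left_mem_frontier_cone2 h hm

lemma range_eq (hT : IsFanRetraction T e₁ e₂ u₁ u₂) : range T = cone2 e₁ e₂ :=
  range_eq_of_mem_of_eq_self hT.mem_cone2 fun _ => hT.map_eq_self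

lemma isRetraction (hT : IsFanRetraction T e₁ e₂ u₁ u₂) : IsRetraction T :=
  isRetraction_of_cone2 hT.cross_pos₁₂.ne' hT.continuous (fun _ ht => hT.map_smul ht)
    hT.mem_cone2 (fun _ => hT.map_eq_self) fun _ => hT.mem_frontier

end IsFanRetraction

theorem stmt2 (e₁ e₂ u₁ u₂ : ℝ × ℝ)
    (he₁ : 0 < e₁.1 ∧ 0 < e₁.2) (he₂ : e₂.1 < 0 ∧ 0 < e₂.2)
    (hu₁ : u₁.1 < 0 ∧ u₁.2 < 0) (hu₂ : 0 < u₂.1 ∧ u₂.2 < 0)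
    (Q : ℝ × ℝ → ℝ × ℝ)
    (hQ1 : ∀ x ∈ cone2 e₁ e₂, Q x = x)
    (hQ4 : ∀ l m : ℝ, 0 ≤ l → 0 ≤ m → Q (l • e₁ + m • u₂) = l • e₁)
    (hQ2 : ∀ l m : ℝ, 0 ≤ l → 0 ≤ m → Q (l • e₂ + m • u₁) = l • e₂)
    (hQ3 : ∀ x ∈ cone2 u₁ u₂, Q x = 0) :
    MutuallyPolar Q (fun x => x - Q x) ∧
    Set.range Q = cone2 e₁ e₂ ∧
    Set.range (fun x => x - Q x) = cone2 u₁ u₂ := by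
  have h₁₂ : 0 < cross e₁ e₂ := by simp only [cross]; nlinarith
  have h₂₃ : 0 < cross e₂ u₁ := by simp only [cross]; nlinarith
  have h₃₄ : 0 < cross u₁ u₂ := by simp only [cross]; nlinarith
  have h₄₁ : 0 < cross u₂ e₁ := by simp only [cross]; nlinarith
  have hQ : IsFanRetraction Q e₁ e₂ u₁ u₂ :=
    ⟨h₁₂, h₂₃, h₃₄, h₄₁, fun l m hl hm => hQ1 _ ⟨l, m, hl, hm, rfl⟩,
      fun l m hl hm => by simpa using hQ2 l m hl hm,
      fun l m hl hm => by simpa using hQ3 _ ⟨l, m, hl, hm, rfl⟩,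
      fun l m hl hm => by simpa [add_comm] using hQ4 m l hm hl⟩
  have hR : IsFanRetraction (fun x => x - Q x) u₁ u₂ e₁ e₂ :=
    ⟨h₃₄, h₄₁, h₁₂, h₂₃, fun l m hl hm => by simp [hQ3 _ ⟨l, m, hl, hm, rfl⟩],
      fun l m hl hm => by simp [add_comm (l • u₂), hQ4 m l hm hl],
      fun l m hl hm => by simp [hQ1 _ ⟨l, m, hl, hm, rfl⟩],
      fun l m hl hm => by simp [hQ2 l m hl hm]⟩
  refine ⟨⟨hQ.isRetraction, hR.isRetraction, fun x => add_sub_cancel _ _,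
    fun x => hQ3 _ (hR.mem_cone2 x), fun x => by simp [hQ.map_eq_self (hQ.mem_cone2 x)]⟩,
    hQ.range_eq, hR.range_eq⟩
end

section
/- If g : X → ℝ₊ is an asymmetric norm on a Banach space X, then q : ℝ × X → ℝ₊ defined by q(t,x) = max(t + g(x), 0) is an asymmetric norm on ℝ × X satisfying q((t,x) − q(t,x)·(1,0)) = 0 for all (t,x). -/
open Set

variable {X : Type*} [NormedAddCommGroup X] [NormedSpace ℝ X]

/-- An asymmetric norm: nonnegative, positively homogeneous, subadditive, and
`q x = q (-x) = 0 → x = 0`. -/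
def IsAsymNorm {Y : Type*} [NormedAddCommGroup Y] [NormedSpace ℝ Y] (q : Y → ℝ) : Prop :=
  (∀ x, 0 ≤ q x) ∧ (∀ t : ℝ, 0 ≤ t → ∀ x, q (t • x) = t * q x) ∧
  (∀ x y, q (x + y) ≤ q x + q y) ∧ ∀ x, q x = 0 → q (-x) = 0 → x = 0

def shiftNorm {E : Type*} (g : E → ℝ) (p : ℝ × E) : ℝ := max (p.1 + g p.2) 0

section shiftNorm

variable {E : Type*} (g : E → ℝ)

lemma shiftNorm_nonneg (p : ℝ × E) : 0 ≤ shiftNorm g p := le_max_right _ _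

variable [AddCommGroup E] [Module ℝ E]

lemma shiftNorm_sub_smul_fst (p : ℝ × E) (s : ℝ) :
    shiftNorm g (p - s • ((1 : ℝ), (0 : E))) = max (p.1 + g p.2 - s) 0 := by
  simp only [shiftNorm, Prod.fst_sub, Prod.snd_sub, Prod.smul_mk, smul_eq_mul, mul_one,
    smul_zero, sub_zero, sub_add_eq_add_sub]

lemma shiftNorm_sub_shiftNorm_smul_fst (p : ℝ × E) :
    shiftNorm g (p - shiftNorm g p • ((1 : ℝ), (0 : E))) = 0 := by
  rw [shiftNorm_sub_smul_fst]
  exact max_eq_right (sub_nonpos.2 (le_max_left _ _))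

end shiftNorm

namespace IsAsymNorm

variable {g : X → ℝ}

lemma map_zero (hg : IsAsymNorm g) : g 0 = 0 := by
  simpa using hg.2.1 0 le_rfl 0

lemma eq_zero_of_add_map_neg_nonpos (hg : IsAsymNorm g) {x : X} (hx : g x + g (-x) ≤ 0) :
    x = 0 :=
  hg.2.2.2 x (by linarith [hg.1 x, hg.1 (-x)]) (by linarith [hg.1 x, hg.1 (-x)])

lemma shiftNorm_smul (hg : IsAsymNorm g) {t : ℝ} (ht : 0 ≤ t) (p : ℝ × X) :
    shiftNorm g (t • p) = t * shiftNorm g p := by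
  simp only [shiftNorm, Prod.smul_fst, Prod.smul_snd, smul_eq_mul, hg.2.1 t ht, ← mul_add,
    mul_max_of_nonneg _ _ ht, mul_zero]

lemma shiftNorm_add_le (hg : IsAsymNorm g) (p q : ℝ × X) :
    shiftNorm g (p + q) ≤ shiftNorm g p + shiftNorm g q :=
  calc max (p.1 + q.1 + g (p.2 + q.2)) 0
      ≤ max ((p.1 + g p.2) + (q.1 + g q.2)) 0 :=
        max_le_max_right 0 (by linarith [hg.2.2.1 p.2 q.2])
    _ = max ((p.1 + g p.2) + (q.1 + g q.2)) (0 + 0) := by rw [add_zero]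
    _ ≤ shiftNorm g p + shiftNorm g q := max_add_add_le_max_add_max

lemma shiftNorm_eq_zero (hg : IsAsymNorm g) {p : ℝ × X} (hp : shiftNorm g p = 0)
    (hp' : shiftNorm g (-p) = 0) : p = 0 := by
  have hle : p.1 + g p.2 ≤ 0 := max_eq_right_iff.1 hp
  have hle' : -p.1 + g (-p.2) ≤ 0 := max_eq_right_iff.1 hp'
  -- adding the two inequalities eliminates `p.1`
  have hx : p.2 = 0 := hg.eq_zero_of_add_map_neg_nonpos (by linarith)
  rw [hx, hg.map_zero] at hle
  rw [hx, neg_zero, hg.map_zero] at hle'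
  exact Prod.ext (by simp only [Prod.fst_zero]; linarith) hx

protected lemma shiftNorm (hg : IsAsymNorm g) : IsAsymNorm (shiftNorm g) :=
  ⟨shiftNorm_nonneg g, fun _ ht => hg.shiftNorm_smul ht, hg.shiftNorm_add_le,
    fun _ => hg.shiftNorm_eq_zero⟩

end IsAsymNorm

theorem stmt11 (g : X → ℝ) (hg : IsAsymNorm g) :
    IsAsymNorm (fun p : ℝ × X => max (p.1 + g p.2) 0) ∧
    ∀ p : ℝ × X,
      max ((p - max (p.1 + g p.2) 0 • ((1 : ℝ), (0 : X))).1 +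
          g (p - max (p.1 + g p.2) 0 • ((1 : ℝ), (0 : X))).2) 0 = 0 :=
  ⟨hg.shiftNorm, shiftNorm_sub_shiftNorm_smul_fst g⟩
end

section
/- Let X be a separable Banach space, M a closed cone with nonempty interior, and N a one-dimensional closed cone such that M and N are transversal. Then there exists a unique pair of mutually polar retractions Q, R with range Q = M and range R = N, and both Q and R are subadditive with respect to the orders induced by their respective cone ranges. -/
open Set

variable {X : Type*} [NormedAddCommGroup X] [NormedSpace ℝ X]

/-!
Let `e` span `N`. Transversality forces `-e ∈ interior M` and `e ∉ M`, so `N` is the ray `ℝ≥0 • e`.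
The gauge `g x = min {t ≥ 0 | x - t • e ∈ M}` is finite because the interior point `-e` absorbs
every `x`, and it is sublinear and Lipschitz; `Q x = x - g x • e` and `R x = g x • e` are then
mutually polar retractions onto `M` and `N`, subadditive because `g` is. Conversely, for any such
pair `R x = t • e` with `x - t • e ∈ M`, so `g x ≤ t`, and `g x < t` would push `Q x` into the
interior of `M`, which is impossible both when `x ∈ M` (then `Q x = x`, `t = 0`) and when `x ∉ M`
(then `Q x` lies on the boundary).
-/

open Filter Topology Submodule Module

lemma exists_pos_add_smul_mem_of_mem_interior {s : Set X} {p : X} (hp : p ∈ interior s) (v : X)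
    {a : ℝ} (ha : 0 < a) : ∃ δ, 0 < δ ∧ δ < a ∧ p + δ • v ∈ s := by
  have hlim : Tendsto (fun δ : ℝ => p + δ • v) (𝓝[>] 0) (𝓝 p) := by
    have hcont : Continuous fun δ : ℝ => p + δ • v := by fun_prop
    simpa using (hcont.tendsto 0).mono_left nhdsWithin_le_nhds
  obtain ⟨δ, hδs, hδ⟩ :=
    ((hlim.eventually_mem (mem_interior_iff_mem_nhds.mp hp)).and (Ioo_mem_nhdsGT ha)).exists
  exact ⟨δ, hδ.1, hδ.2, hδs⟩

open Pointwise in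
lemma smul_mem_interior_of_smul_mem {M : Set X}
    (hcone : ∀ t : ℝ, 0 ≤ t → ∀ x ∈ M, t • x ∈ M) {c : ℝ} (hc : 0 < c) {p : X}
    (hp : p ∈ interior M) : c • p ∈ interior M := by
  have hsub : c • M ⊆ M := by
    rintro _ ⟨x, hx, rfl⟩
    exact hcone c hc.le x hx
  exact interior_mono hsub (by rw [interior_smul₀ hc.ne']; exact smul_mem_smul_set hp)

lemma isRetraction_of_range_eq {T : X → X} {C : Set X} (hT : range T = C) (hcont : Continuous T)
    (hhom : ∀ t : ℝ, 0 ≤ t → ∀ x, T (t • x) = t • T x) (hfix : ∀ x ∈ C, T x = x)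
    (hC0 : C ≠ {0}) (hCc : IsClosed C) (hCconv : Convex ℝ C)
    (hCcone : ∀ t : ℝ, 0 ≤ t → ∀ y ∈ C, t • y ∈ C) (hfront : ∀ x ∉ C, T x ∉ interior C) :
    IsRetraction T := by
  subst hT
  refine ⟨hcont, hhom, fun x => hfix _ (mem_range_self x), hC0, hCc, hCconv, hCcone, fun x hx => ?_⟩
  rw [hCc.frontier_eq]
  exact ⟨mem_range_self x, hfront x hx⟩

def ray (e : X) : Set X := (fun t : ℝ => t • e) '' Ici 0

section Ray

variable {e : X}

lemma mem_ray {x : X} : x ∈ ray e ↔ ∃ t : ℝ, 0 ≤ t ∧ t • e = x := Iff.rfl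

lemma self_mem_ray (e : X) : e ∈ ray e := ⟨1, mem_Ici.2 zero_le_one, one_smul ℝ e⟩

lemma smul_mem_ray : ∀ t : ℝ, 0 ≤ t → ∀ x ∈ ray e, t • x ∈ ray e := by
  rintro t ht _ ⟨s, hs, rfl⟩
  exact ⟨t * s, mem_Ici.2 (mul_nonneg ht hs), mul_smul t s e⟩

lemma isClosed_ray (e : X) : IsClosed (ray e) := isClosedMap_smul_left e _ isClosed_Ici

lemma convex_ray (e : X) : Convex ℝ (ray e) :=
  (convex_Ici 0).is_linear_image (IsLinearMap.isLinearMap_smul' e)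

lemma exists_eq_smul_of_nonempty_interior_ray (h : (interior (ray e)).Nonempty) (x : X) :
    ∃ t : ℝ, x = t • e := by
  have hsub : ray e ⊆ span ℝ {e} := by
    rintro _ ⟨t, -, rfl⟩
    exact smul_mem _ t (mem_span_singleton_self e)
  have htop := (span ℝ {e}).eq_top_of_nonempty_interior' (h.mono (interior_mono hsub))
  obtain ⟨t, ht⟩ := mem_span_singleton.1 (htop ▸ mem_top : x ∈ span ℝ {e})
  exact ⟨t, ht.symm⟩

lemma zero_notMem_interior_ray (he : e ≠ 0) : (0 : X) ∉ interior (ray e) := by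
  intro h0
  obtain ⟨δ, hδ, -, ⟨t, ht, hte⟩⟩ := exists_pos_add_smul_mem_of_mem_interior h0 (-e) one_pos
  have hzero : (t + δ) • e = 0 := by simp only at hte; rw [add_smul, hte]; simp
  rcases smul_eq_zero.1 hzero with h | h
  · linarith [mem_Ici.1 ht]
  · exact he h

lemma eq_ray_of_finrank_span_eq_one {N : Set X} (hcone : ∀ t : ℝ, 0 ≤ t → ∀ x ∈ N, t • x ∈ N)
    (hdim : finrank ℝ (span ℝ N) = 1) (he : e ∈ N) (he0 : e ≠ 0) (hneg : -e ∉ N) :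
    N = ray e := by
  have hspan := eq_span_singleton_of_mem_of_finrank_eq_one hdim (subset_span he) he0
  ext x
  constructor
  · intro hx
    obtain ⟨t, rfl⟩ := mem_span_singleton.1 (hspan ▸ subset_span hx)
    refine ⟨t, mem_Ici.2 (not_lt.1 fun ht => hneg ?_), rfl⟩
    convert hcone (-t⁻¹) (by simp [ht.le]) _ hx using 1
    rw [smul_smul, neg_mul, inv_mul_cancel₀ ht.ne, neg_one_smul]
  · rintro ⟨t, ht, rfl⟩
    exact hcone t ht e he

end Ray

structure IsTransversalRay (M : Set X) (e : X) : Prop where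
  isClosed : IsClosed M
  convex : Convex ℝ M
  smul_mem : ∀ t : ℝ, 0 ≤ t → ∀ x ∈ M, t • x ∈ M
  notMem : e ∉ M
  neg_mem_interior : -e ∈ interior M

noncomputable def rayGauge (M : Set X) (e x : X) : ℝ := sInf {t : ℝ | 0 ≤ t ∧ x - t • e ∈ M}

noncomputable def coneRetraction (M : Set X) (e x : X) : X := x - rayGauge M e x • e

noncomputable def rayRetraction (M : Set X) (e x : X) : X := rayGauge M e x • e

namespace IsTransversalRay

variable {M : Set X} {e x y : X}

lemma neg_mem (h : IsTransversalRay M e) : -e ∈ M := interior_subset h.neg_mem_interior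

lemma ne_zero (h : IsTransversalRay M e) : e ≠ 0 := by
  rintro rfl
  exact h.notMem (by simpa using h.neg_mem)

lemma add_mem (h : IsTransversalRay M e) {a b : X} (ha : a ∈ M) (hb : b ∈ M) : a + b ∈ M := by
  have hmid := h.convex ha hb (by norm_num : (0 : ℝ) ≤ 1 / 2) (by norm_num : (0 : ℝ) ≤ 1 / 2)
    (by norm_num)
  convert h.smul_mem 2 zero_le_two _ hmid using 1
  module

lemma smul_mem_iff (h : IsTransversalRay M e) {c : ℝ} (hc : 0 < c) : c • x ∈ M ↔ x ∈ M :=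
  ⟨fun hx => by simpa [hc.ne'] using h.smul_mem c⁻¹ (inv_nonneg.2 hc.le) _ hx,
    h.smul_mem c hc.le x⟩

lemma smul_self_mem_iff (h : IsTransversalRay M e) {c : ℝ} : c • e ∈ M ↔ c ≤ 0 := by
  refine ⟨fun hc => not_lt.1 fun hpos => h.notMem ((h.smul_mem_iff hpos).1 hc), fun hc => ?_⟩
  convert h.smul_mem (-c) (neg_nonneg.2 hc) _ h.neg_mem using 1
  module

lemma sub_smul_mem_of_le (h : IsTransversalRay M e) {t s : ℝ} (hx : x - t • e ∈ M) (hts : t ≤ s) :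
    x - s • e ∈ M := by
  convert h.add_mem hx (h.smul_mem (s - t) (sub_nonneg.2 hts) _ h.neg_mem) using 1
  module

open Pointwise in
lemma sub_smul_mem_interior (h : IsTransversalRay M e) (hx : x ∈ M) {c : ℝ} (hc : 0 < c) :
    x - c • e ∈ interior M := by
  have hopen : x +ᵥ interior M ⊆ interior M :=
    interior_maximal (by rintro _ ⟨p, hp, rfl⟩; exact h.add_mem hx (interior_subset hp))
      (isOpen_interior.vadd x)
  rw [sub_eq_add_neg, ← smul_neg]
  exact hopen (vadd_mem_vadd_set (smul_mem_interior_of_smul_mem h.smul_mem hc h.neg_mem_interior))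

lemma exists_sub_smul_mem (h : IsTransversalRay M e) :
    ∃ C : NNReal, ∀ x t, C * ‖x‖ < t → x - t • e ∈ M := by
  obtain ⟨ε, hε, hball⟩ := Metric.mem_nhds_iff.1 (mem_interior_iff_mem_nhds.1 h.neg_mem_interior)
  refine ⟨⟨ε⁻¹, inv_nonneg.2 hε.le⟩, fun x t ht => ?_⟩
  change ε⁻¹ * ‖x‖ < t at ht
  have htpos : 0 < t := lt_of_le_of_lt (by positivity) ht
  have hx : ‖x‖ < t * ε := by
    rw [inv_mul_lt_iff₀ hε] at ht
    linarith
  have hmem : t⁻¹ • x - e ∈ Metric.ball (-e) ε := by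
    rw [Metric.mem_ball, dist_eq_norm, sub_neg_eq_add, sub_add_cancel, norm_smul,
      Real.norm_eq_abs, abs_inv, abs_of_pos htpos, inv_mul_lt_iff₀ htpos]
    exact hx
  convert h.smul_mem t htpos.le _ (hball hmem) using 1
  rw [smul_sub, smul_inv_smul₀ htpos.ne']

lemma rayGauge_le_iff (h : IsTransversalRay M e) {t : ℝ} :
    rayGauge M e x ≤ t ↔ 0 ≤ t ∧ x - t • e ∈ M := by
  set S := {t : ℝ | 0 ≤ t ∧ x - t • e ∈ M}
  obtain ⟨C, hC⟩ := h.exists_sub_smul_mem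
  have hne : S.Nonempty := ⟨C * ‖x‖ + 1, by positivity, hC x _ (lt_add_one _)⟩
  have hbdd : BddBelow S := ⟨0, fun s hs => hs.1⟩
  have hclosed : IsClosed S :=
    isClosed_Ici.inter (h.isClosed.preimage (by fun_prop))
  refine ⟨fun ht => ?_, fun ht => csInf_le hbdd ht⟩
  obtain ⟨hS0, hSmem⟩ := hclosed.csInf_mem hne hbdd
  exact ⟨hS0.trans ht, h.sub_smul_mem_of_le hSmem ht⟩

lemma rayGauge_nonneg (h : IsTransversalRay M e) : 0 ≤ rayGauge M e x :=
  (h.rayGauge_le_iff.1 le_rfl).1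

lemma sub_rayGauge_smul_mem (h : IsTransversalRay M e) : x - rayGauge M e x • e ∈ M :=
  (h.rayGauge_le_iff.1 le_rfl).2

lemma rayGauge_eq_zero_of_mem (h : IsTransversalRay M e) (hx : x ∈ M) : rayGauge M e x = 0 :=
  le_antisymm (h.rayGauge_le_iff.2 ⟨le_rfl, by simpa using hx⟩) h.rayGauge_nonneg

lemma rayGauge_smul_self (h : IsTransversalRay M e) {t : ℝ} (ht : 0 ≤ t) :
    rayGauge M e (t • e) = t :=
  eq_of_forall_ge_iff fun s => by
    rw [h.rayGauge_le_iff, ← sub_smul, h.smul_self_mem_iff, sub_nonpos]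
    exact ⟨fun hs => hs.2, fun hs => ⟨ht.trans hs, hs⟩⟩

lemma rayGauge_add_le (h : IsTransversalRay M e) :
    rayGauge M e (x + y) ≤ rayGauge M e x + rayGauge M e y := by
  refine h.rayGauge_le_iff.2 ⟨add_nonneg h.rayGauge_nonneg h.rayGauge_nonneg, ?_⟩
  convert h.add_mem (h.sub_rayGauge_smul_mem (x := x)) (h.sub_rayGauge_smul_mem (x := y)) using 1
  module

lemma rayGauge_smul (h : IsTransversalRay M e) {c : ℝ} (hc : 0 ≤ c) :
    rayGauge M e (c • x) = c * rayGauge M e x := by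
  rcases hc.eq_or_lt with rfl | hc
  · simp [h.rayGauge_eq_zero_of_mem (zero_smul ℝ e ▸ h.smul_self_mem_iff.2 le_rfl)]
  refine eq_of_forall_ge_iff fun t => ?_
  have heq : c • x - t • e = c • (x - (t / c) • e) := by
    rw [smul_sub, smul_smul, mul_div_cancel₀ t hc.ne']
  rw [h.rayGauge_le_iff, ← le_div_iff₀' hc, h.rayGauge_le_iff, le_div_iff₀ hc, zero_mul, heq,
    h.smul_mem_iff hc]

lemma continuous_rayGauge (h : IsTransversalRay M e) : Continuous (rayGauge M e) := by
  obtain ⟨C, hC⟩ := h.exists_sub_smul_mem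
  have hbound : ∀ x, rayGauge M e x ≤ C * ‖x‖ := fun x =>
    le_of_forall_gt_imp_ge_of_dense fun t ht =>
      h.rayGauge_le_iff.2 ⟨(by positivity : (0 : ℝ) ≤ C * ‖x‖).trans ht.le, hC x t ht⟩
  refine (LipschitzWith.of_le_add_mul C fun x y => ?_).continuous
  calc rayGauge M e x = rayGauge M e (y + (x - y)) := by rw [add_sub_cancel]
    _ ≤ rayGauge M e y + rayGauge M e (x - y) := h.rayGauge_add_le
    _ ≤ rayGauge M e y + C * dist x y := by rw [dist_eq_norm]; linarith [hbound (x - y)]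

lemma range_coneRetraction (h : IsTransversalRay M e) : range (coneRetraction M e) = M :=
  Subset.antisymm (range_subset_iff.2 fun _ => h.sub_rayGauge_smul_mem)
    fun x hx => ⟨x, by simp [coneRetraction, h.rayGauge_eq_zero_of_mem hx]⟩

lemma range_rayRetraction (h : IsTransversalRay M e) : range (rayRetraction M e) = ray e := by
  ext x
  constructor
  · rintro ⟨y, rfl⟩
    exact ⟨_, mem_Ici.2 h.rayGauge_nonneg, rfl⟩
  · rintro ⟨t, ht, rfl⟩
    exact ⟨t • e, by rw [rayRetraction, h.rayGauge_smul_self (mem_Ici.1 ht)]⟩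

lemma isRetraction_coneRetraction (h : IsTransversalRay M e) :
    IsRetraction (coneRetraction M e) := by
  refine isRetraction_of_range_eq h.range_coneRetraction
    (continuous_id.sub (h.continuous_rayGauge.smul continuous_const)) (fun t ht x => ?_)
    (fun x hx => by simp [coneRetraction, h.rayGauge_eq_zero_of_mem hx])
    (fun h0 => h.ne_zero (by simpa [h0] using h.neg_mem)) h.isClosed h.convex h.smul_mem
    (fun x hx hint => ?_)
  · rw [coneRetraction, coneRetraction, h.rayGauge_smul ht, smul_sub, mul_smul]
  · have hpos : 0 < rayGauge M e x := h.rayGauge_nonneg.lt_of_ne fun h0 =>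
      hx (by simpa [← h0] using h.sub_rayGauge_smul_mem (x := x))
    -- `Q x + δ • e ∈ M` for a small `δ > 0` would beat the minimality of the gauge
    obtain ⟨δ, hδ0, hδ, hδM⟩ := exists_pos_add_smul_mem_of_mem_interior hint e hpos
    have hle := (h.rayGauge_le_iff (x := x)).2 ⟨sub_nonneg.2 hδ.le, by
      convert hδM using 1
      rw [coneRetraction]
      module⟩
    linarith

lemma isRetraction_rayRetraction (h : IsTransversalRay M e) :
    IsRetraction (rayRetraction M e) := by
  refine isRetraction_of_range_eq h.range_rayRetraction
    (h.continuous_rayGauge.smul continuous_const) (fun t ht x => ?_) (fun x hx => ?_)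
    (fun h0 => h.ne_zero (by simpa [h0] using self_mem_ray e)) (isClosed_ray e) (convex_ray e)
    smul_mem_ray (fun x hx hint => ?_)
  · rw [rayRetraction, rayRetraction, h.rayGauge_smul ht, mul_smul]
  · obtain ⟨t, ht, rfl⟩ := hx
    rw [rayRetraction, h.rayGauge_smul_self (mem_Ici.1 ht)]
  · obtain ⟨t, rfl⟩ := exists_eq_smul_of_nonempty_interior_ray ⟨_, hint⟩ x
    have ht : t ≤ 0 := not_lt.1 fun ht => hx ⟨t, mem_Ici.2 ht.le, rfl⟩
    rw [rayRetraction, h.rayGauge_eq_zero_of_mem (h.smul_self_mem_iff.2 ht), zero_smul] at hint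
    exact zero_notMem_interior_ray h.ne_zero hint

lemma mutuallyPolar (h : IsTransversalRay M e) :
    MutuallyPolar (coneRetraction M e) (rayRetraction M e) :=
  ⟨h.isRetraction_coneRetraction, h.isRetraction_rayRetraction, fun _ => sub_add_cancel _ _,
    fun _ => by simp [coneRetraction, rayRetraction, h.rayGauge_smul_self h.rayGauge_nonneg],
    fun _ => by
      rw [rayRetraction, coneRetraction, h.rayGauge_eq_zero_of_mem h.sub_rayGauge_smul_mem,
        zero_smul]⟩

lemma eq_of_mutuallyPolar (h : IsTransversalRay M e) {Q R : X → X} (hQR : MutuallyPolar Q R)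
    (hQ : range Q = M) (hR : range R = ray e) :
    Q = coneRetraction M e ∧ R = rayRetraction M e := by
  obtain ⟨⟨-, -, hQQ, -, -, -, -, hfront⟩, -, hsum, -, -⟩ := hQR
  have hRx : ∀ x, R x = rayRetraction M e x := fun x => by
    obtain ⟨t, ht, hRx⟩ := mem_ray.1 (hR ▸ mem_range_self x : R x ∈ ray e)
    have hQx : Q x = x - t • e := by rw [hRx]; exact eq_sub_of_add_eq (hsum x)
    have hle : rayGauge M e x ≤ t := h.rayGauge_le_iff.2 ⟨ht, hQx ▸ hQ ▸ mem_range_self x⟩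
    suffices ¬ rayGauge M e x < t by rw [← hRx, rayRetraction, le_antisymm (not_lt.1 this) hle]
    intro hlt
    have hint : Q x ∈ interior M := by
      convert h.sub_smul_mem_interior h.sub_rayGauge_smul_mem (sub_pos.2 hlt) using 1
      rw [hQx]
      module
    by_cases hx : x ∈ M
    · obtain ⟨y, rfl⟩ := hQ ▸ hx
      rw [hQQ, eq_sub_iff_add_eq, add_eq_left] at hQx
      rcases smul_eq_zero.1 hQx with rfl | he
      · linarith [h.rayGauge_nonneg (x := Q y)]
      · exact h.ne_zero he
    · have := hfront x (hQ ▸ hx)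
      rw [hQ, h.isClosed.frontier_eq] at this
      exact this.2 hint
  refine ⟨funext fun x => ?_, funext hRx⟩
  rw [coneRetraction, ← rayRetraction, ← hRx, eq_sub_iff_add_eq, hsum]

lemma coneRetraction_add_sub_mem (h : IsTransversalRay M e) (x y : X) :
    coneRetraction M e x + coneRetraction M e y - coneRetraction M e (x + y) ∈ M := by
  convert h.smul_mem _ (sub_nonneg.2 (h.rayGauge_add_le (x := x) (y := y))) _ h.neg_mem using 1
  simp only [coneRetraction]
  module

lemma rayRetraction_add_sub_mem (h : IsTransversalRay M e) (x y : X) :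
    rayRetraction M e x + rayRetraction M e y - rayRetraction M e (x + y) ∈ ray e :=
  mem_ray.2 ⟨_, sub_nonneg.2 (h.rayGauge_add_le (x := x) (y := y)), by
    simp only [rayRetraction]; module⟩

end IsTransversalRay

lemma neg_mem_interior_of_smul_mem_interior {M : Set X} {e : X}
    (hcone : ∀ t : ℝ, 0 ≤ t → ∀ x ∈ M, t • x ∈ M) (he : ∀ c : ℝ, 0 < c → c • e ∉ M) {c : ℝ}
    (hc : c • e ∈ interior M) : -e ∈ interior M := by
  have hneg : c < 0 := by
    rcases lt_trichotomy c 0 with hc0 | rfl | hc0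
    · exact hc0
    · obtain ⟨δ, hδ, -, hδM⟩ := exists_pos_add_smul_mem_of_mem_interior hc e one_pos
      exact absurd (by simpa using hδM) (he δ hδ)
    · exact absurd (interior_subset hc) (he c hc0)
  convert smul_mem_interior_of_smul_mem hcone (neg_pos.2 (inv_lt_zero.2 hneg)) hc using 1
  rw [smul_smul, neg_mul, inv_mul_cancel₀ hneg.ne, neg_one_smul]

lemma TransversalWith.exists_eq_ray {M N : Set X} {Δ : Submodule ℝ X}
    (htr : TransversalWith M N Δ) (hMc : IsClosed M) (hMconv : Convex ℝ M)
    (hMcone : ∀ t : ℝ, 0 ≤ t → ∀ x ∈ M, t • x ∈ M) (hNcone : ∀ t : ℝ, 0 ≤ t → ∀ x ∈ N, t • x ∈ N)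
    (hMint : (interior M).Nonempty) (hNdim : finrank ℝ (span ℝ N) = 1) :
    ∃ e, N = ray e ∧ IsTransversalRay M e := by
  obtain ⟨hMN, ⟨d, hd0, rfl⟩, ⟨q, hqΔ, hqM, hq0⟩, ⟨e, heΔ, heN, heN0⟩, ⟨w, hwΔ, hw⟩⟩ := htr
  have he0 : e ≠ 0 := fun h => heN0 h
  have hΔ := eq_span_singleton_of_mem_of_finrank_eq_one (finrank_span_singleton hd0) heΔ he0
  have hpos : ∀ c : ℝ, 0 < c → c • e ∉ M := fun c hc hce =>
    he0 (hMN.subset ⟨by simpa [hc.ne'] using hMcone c⁻¹ (inv_nonneg.2 hc.le) _ hce, heN⟩)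
  have hnegM : -e ∈ M := by
    obtain ⟨a, rfl⟩ := mem_span_singleton.1 (hΔ ▸ hqΔ)
    have ha : a < 0 := (lt_or_gt_of_ne fun ha => hq0 (by simp [ha])).resolve_right
      fun ha => hpos a ha hqM
    convert hMcone (-a⁻¹) (neg_nonneg.2 (inv_nonpos.2 ha.le)) _ hqM using 1
    rw [smul_smul, neg_mul, inv_mul_cancel₀ ha.ne, neg_one_smul]
  have hN : N = ray e := eq_ray_of_finrank_span_eq_one hNcone hNdim heN he0
    fun hneg => he0 (neg_eq_zero.1 (hMN.subset ⟨hnegM, hneg⟩))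
  obtain ⟨c, hc⟩ : ∃ c : ℝ, c • e ∈ interior M := by
    rcases hw with hw | hw
    · obtain ⟨c, rfl⟩ := mem_span_singleton.1 (hΔ ▸ hwΔ)
      exact ⟨c, hw⟩
    · obtain ⟨m, hm⟩ := hMint
      obtain ⟨c, rfl⟩ := exists_eq_smul_of_nonempty_interior_ray ⟨w, hN ▸ hw⟩ m
      exact ⟨c, hm⟩
  exact ⟨e, hN, hMc, hMconv, hMcone, fun heM => hpos 1 one_pos (by simpa using heM),
    neg_mem_interior_of_smul_mem_interior hMcone hpos hc⟩

theorem stmt16_general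
    (M N : Set X) (hMc : IsClosed M)
    (hMconv : Convex ℝ M)
    (hMcone : ∀ t : ℝ, 0 ≤ t → ∀ x ∈ M, t • x ∈ M)
    (hNcone : ∀ t : ℝ, 0 ≤ t → ∀ x ∈ N, t • x ∈ N)
    (hMint : (interior M).Nonempty)
    (hNdim : Module.finrank ℝ (Submodule.span ℝ N) = 1)
    (htr : Transversal M N) :
    (∃! p : (X → X) × (X → X),
        MutuallyPolar p.1 p.2 ∧ Set.range p.1 = M ∧ Set.range p.2 = N) ∧
    ∀ Q R : X → X, MutuallyPolar Q R → Set.range Q = M → Set.range R = N →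
      (∀ x y : X, Q x + Q y - Q (x + y) ∈ M) ∧
      (∀ x y : X, R x + R y - R (x + y) ∈ N) := by
  obtain ⟨Δ, hΔ⟩ := htr
  obtain ⟨e, rfl, h⟩ := hΔ.exists_eq_ray hMc hMconv hMcone hNcone hMint hNdim
  refine ⟨⟨(coneRetraction M e, rayRetraction M e),
    ⟨h.mutuallyPolar, h.range_coneRetraction, h.range_rayRetraction⟩, ?_⟩, ?_⟩
  · rintro ⟨Q, R⟩ ⟨hQR, hQ, hR⟩
    obtain ⟨rfl, rfl⟩ := h.eq_of_mutuallyPolar hQR hQ hR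
    rfl
  · intro Q R hQR hQ hR
    obtain ⟨rfl, rfl⟩ := h.eq_of_mutuallyPolar hQR hQ hR
    exact ⟨h.coneRetraction_add_sub_mem, h.rayRetraction_add_sub_mem⟩

theorem stmt16 [CompleteSpace X] [TopologicalSpace.SeparableSpace X]
    (M N : Set X) (hMc : IsClosed M) (hNc : IsClosed N)
    (hMconv : Convex ℝ M) (hNconv : Convex ℝ N)
    (hMcone : ∀ t : ℝ, 0 ≤ t → ∀ x ∈ M, t • x ∈ M)
    (hNcone : ∀ t : ℝ, 0 ≤ t → ∀ x ∈ N, t • x ∈ N)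
    (hMp : M ∩ (-M) = {0}) (hNp : N ∩ (-N) = {0})
    (hMint : (interior M).Nonempty)
    (hNdim : Module.finrank ℝ (Submodule.span ℝ N) = 1)
    (htr : Transversal M N) :
    (∃! p : (X → X) × (X → X),
        MutuallyPolar p.1 p.2 ∧ Set.range p.1 = M ∧ Set.range p.2 = N) ∧
    ∀ Q R : X → X, MutuallyPolar Q R → Set.range Q = M → Set.range R = N →
      (∀ x y : X, Q x + Q y - Q (x + y) ∈ M) ∧
      (∀ x y : X, R x + R y - R (x + y) ∈ N) :=
  stmt16_general M N hMc hMconv hMcone hNcone hMint hNdim htr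
end

section
/- Let K be a generating closed convex cone in a separable Hilbert space H and let P be the metric projection onto K. If P is subadditive with respect to the order induced by K, then I − P is isotone with respect to the order induced by K° (the range of I − P); symmetrically, if P is isotone then I − P is subadditive. -/
/-!
By Moreau's decomposition the residual `x - P x` lies in `K°` and is orthogonal to `P x`. Hence
`⟪d, P d⟫ = ‖P d‖²` for every `d`, so `⟪d, P d⟫ ≤ 0` already forces `P d = 0`, i.e. `d ∈ K°`.
In both directions the vector `d` to be placed in `K°` is split into residuals and a vector of `K`
supplied by the order property of `P`; pairing residuals with elements of `K` then gives
`⟪d, P d⟫ ≤ 0`.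
-/

open Set RealInnerProductSpace

theorem Convex.add_mem_of_smul_mem_s19 {E : Type*} [AddCommGroup E] [Module ℝ E] {K : Set E}
    (hconv : Convex ℝ K) (hcone : ∀ t : ℝ, 0 ≤ t → ∀ x ∈ K, t • x ∈ K) {a b : E} (ha : a ∈ K)
    (hb : b ∈ K) : a + b ∈ K := by
  have hmid : (2⁻¹ : ℝ) • a + (2⁻¹ : ℝ) • b ∈ K :=
    hconv ha hb (by norm_num) (by norm_num) (by norm_num)
  have h := hcone 2 zero_le_two _ hmid
  rwa [smul_add, smul_smul, smul_smul, mul_inv_cancel₀ two_ne_zero, one_smul, one_smul] at h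

section

variable {H : Type*} [NormedAddCommGroup H]

def IsMetricProjection (K : Set H) (P : H → H) : Prop :=
  ∀ x, P x ∈ K ∧ ∀ y ∈ K, ‖x - P x‖ ≤ ‖x - y‖

namespace IsMetricProjection

variable {K : Set H} {P : H → H}

theorem mem (hP : IsMetricProjection K P) (x : H) : P x ∈ K := (hP x).1

theorem apply_eq_self (hP : IsMetricProjection K P) {k : H} (hk : k ∈ K) : P k = k := by
  have h : ‖k - P k‖ ≤ 0 := by simpa using (hP k).2 k hk
  exact (sub_eq_zero.1 (norm_le_zero_iff.1 h)).symm

end IsMetricProjection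

variable [InnerProductSpace ℝ H]

def polarCone (K : Set H) : Set H := {z | ∀ w ∈ K, ⟪z, w⟫ ≤ 0}

theorem add_mem_polarCone {K : Set H} {a b : H} (ha : a ∈ polarCone K) (hb : b ∈ polarCone K) :
    a + b ∈ polarCone K := fun w hw => by
  rw [inner_add_left]
  linarith [ha w hw, hb w hw]

namespace IsMetricProjection

variable {K : Set H} {P : H → H}

theorem zero_mem (hP : IsMetricProjection K P) (hcone : ∀ t : ℝ, 0 ≤ t → ∀ x ∈ K, t • x ∈ K) :
    (0 : H) ∈ K := by
  simpa using hcone 0 le_rfl _ (hP.mem 0)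

theorem inner_sub_sub_nonpos (hP : IsMetricProjection K P) (hconv : Convex ℝ K) (x : H)
    {y : H} (hy : y ∈ K) : ⟪x - P x, y - P x⟫ ≤ 0 := by
  have : Nonempty K := ⟨⟨P x, hP.mem x⟩⟩
  have hbdd : BddBelow (range fun w : K => ‖x - w‖) :=
    ⟨0, by rintro _ ⟨w, rfl⟩; exact norm_nonneg _⟩
  have hinf : ‖x - P x‖ = ⨅ w : K, ‖x - w‖ :=
    le_antisymm (le_ciInf fun w => (hP x).2 w w.2) (ciInf_le hbdd ⟨P x, hP.mem x⟩)
  exact (norm_eq_iInf_iff_real_inner_le_zero hconv (hP.mem x)).1 hinf y hy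

/-- Testing the variational inequality against `0` and `2 • P x`. -/
theorem inner_sub_apply_eq_zero (hP : IsMetricProjection K P) (hconv : Convex ℝ K)
    (hcone : ∀ t : ℝ, 0 ≤ t → ∀ x ∈ K, t • x ∈ K) (x : H) :
    ⟪x - P x, P x⟫ = 0 := by
  have h₂ := hP.inner_sub_sub_nonpos hconv x (hcone 2 zero_le_two _ (hP.mem x))
  have h₀ := hP.inner_sub_sub_nonpos hconv x (hP.zero_mem hcone)
  rw [two_smul, add_sub_cancel_right] at h₂
  rw [zero_sub, inner_neg_right] at h₀
  linarith

theorem sub_mem_polarCone (hP : IsMetricProjection K P) (hconv : Convex ℝ K)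
    (hcone : ∀ t : ℝ, 0 ≤ t → ∀ x ∈ K, t • x ∈ K) (x : H) : x - P x ∈ polarCone K :=
  fun w hw => by
    simpa using hP.inner_sub_sub_nonpos hconv x (hconv.add_mem_of_smul_mem_s19 hcone (hP.mem x) hw)

theorem apply_eq_zero_of_inner_apply_nonpos (hP : IsMetricProjection K P) (hconv : Convex ℝ K)
    (hcone : ∀ t : ℝ, 0 ≤ t → ∀ x ∈ K, t • x ∈ K) {d : H}
    (h : ⟪d, P d⟫ ≤ 0) : P d = 0 := by
  have hsplit : ⟪d, P d⟫ = ⟪d - P d, P d⟫ + ⟪P d, P d⟫ := by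
    rw [← inner_add_left, sub_add_cancel]
  rw [hsplit, hP.inner_sub_apply_eq_zero hconv hcone, zero_add] at h
  exact real_inner_self_nonpos.1 h

theorem mem_polarCone_of_inner_apply_nonpos (hP : IsMetricProjection K P) (hconv : Convex ℝ K)
    (hcone : ∀ t : ℝ, 0 ≤ t → ∀ x ∈ K, t • x ∈ K) {d : H}
    (h : ⟪d, P d⟫ ≤ 0) : d ∈ polarCone K := by
  simpa [hP.apply_eq_zero_of_inner_apply_nonpos hconv hcone h] using
    hP.sub_mem_polarCone hconv hcone d

theorem apply_eq_zero_of_mem_polarCone (hP : IsMetricProjection K P) (hconv : Convex ℝ K)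
    (hcone : ∀ t : ℝ, 0 ≤ t → ∀ x ∈ K, t • x ∈ K) {u : H}
    (hu : u ∈ polarCone K) : P u = 0 :=
  hP.apply_eq_zero_of_inner_apply_nonpos hconv hcone (hu _ (hP.mem u))

theorem sub_isotone_of_subadditive (hP : IsMetricProjection K P) (hconv : Convex ℝ K)
    (hcone : ∀ t : ℝ, 0 ≤ t → ∀ x ∈ K, t • x ∈ K)
    (hsub : ∀ x y : H, P x + P y - P (x + y) ∈ K) {x y : H} (hxy : y - x ∈ polarCone K) :
    (y - P y) - (x - P x) ∈ polarCone K := by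
  set d := (y - P y) - (x - P x)
  have hPu : P (y - x) = 0 := hP.apply_eq_zero_of_mem_polarCone hconv hcone hxy
  have hk : P x - P y ∈ K := by simpa [hPu] using hsub x (y - x)
  have hkd : P x - P y - P d ∈ K := by
    have hd : y - x + (P x - P y) = d := by simp only [d]; abel
    simpa [hPu, hP.apply_eq_self hk, hd] using hsub (y - x) (P x - P y)
  have hxk : ⟪x - P x, P x - P y⟫ = -⟪x - P x, P y⟫ := by
    rw [inner_sub_right, hP.inner_sub_apply_eq_zero hconv hcone, zero_sub]
  have hx := hP.sub_mem_polarCone hconv hcone x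
  have hy := hP.sub_mem_polarCone hconv hcone y
  apply hP.mem_polarCone_of_inner_apply_nonpos hconv hcone
  have hxd := hx _ hkd
  rw [inner_sub_right, hxk] at hxd
  rw [inner_sub_left]
  linarith [hx _ (hP.mem y), hy _ (hP.mem d)]

theorem sub_apply_add_mem_polarCone_of_isotone (hP : IsMetricProjection K P) (hconv : Convex ℝ K)
    (hcone : ∀ t : ℝ, 0 ≤ t → ∀ x ∈ K, t • x ∈ K)
    (hiso : ∀ x y : H, y - x ∈ K → P y - P x ∈ K) (z : H) {u : H} (hu : u ∈ polarCone K) :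
    P (z + u) - P z ∈ polarCone K := by
  set δ := P (z + u) - P z
  set s := z + u - P (z + u)
  have hδ : P (z + u) - P δ ∈ K := by
    have h := hiso δ (P (z + u)) (by simpa [δ] using hP.mem z)
    rwa [hP.apply_eq_self (hP.mem (z + u))] at h
  have hsδ := hP.sub_mem_polarCone hconv hcone (z + u) _ hδ
  rw [inner_sub_right, hP.inner_sub_apply_eq_zero hconv hcone] at hsδ
  have hsplit : ⟪δ, P δ⟫ = ⟪u, P δ⟫ + ⟪z - P z, P δ⟫ - ⟪s, P δ⟫ := by
    rw [← inner_add_left, ← inner_sub_left]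
    congr 1
    simp only [δ, s]
    abel
  apply hP.mem_polarCone_of_inner_apply_nonpos hconv hcone
  rw [hsplit]
  linarith [hu _ (hP.mem δ), hP.sub_mem_polarCone hconv hcone z _ (hP.mem δ)]

theorem sub_subadditive_of_isotone (hP : IsMetricProjection K P) (hconv : Convex ℝ K)
    (hcone : ∀ t : ℝ, 0 ≤ t → ∀ x ∈ K, t • x ∈ K)
    (hiso : ∀ x y : H, y - x ∈ K → P y - P x ∈ K) (x y : H) :
    (x - P x) + (y - P y) - ((x + y) - P (x + y)) ∈ polarCone K := by
  have hz : P x + P y ∈ K := hconv.add_mem_of_smul_mem_s19 hcone (hP.mem x) (hP.mem y)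
  have h := hP.sub_apply_add_mem_polarCone_of_isotone hconv hcone hiso (P x + P y)
    (add_mem_polarCone (hP.sub_mem_polarCone hconv hcone x) (hP.sub_mem_polarCone hconv hcone y))
  rw [hP.apply_eq_self hz, show P x + P y + (x - P x + (y - P y)) = x + y by abel] at h
  convert h using 1
  abel

end IsMetricProjection

end

theorem stmt19_general {H : Type*} [NormedAddCommGroup H] [InnerProductSpace ℝ H]
    (K : Set H) (hconv : Convex ℝ K)
    (hcone : ∀ t : ℝ, 0 ≤ t → ∀ x ∈ K, t • x ∈ K)
    (P : H → H) (hP : ∀ x, P x ∈ K ∧ ∀ y ∈ K, ‖x - P x‖ ≤ ‖x - y‖) :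
    ((∀ x y : H, P x + P y - P (x + y) ∈ K) →
      ∀ x y : H, y - x ∈ {z : H | ∀ w ∈ K, ⟪z, w⟫ ≤ 0} →
        (y - P y) - (x - P x) ∈ {z : H | ∀ w ∈ K, ⟪z, w⟫ ≤ 0}) ∧
    ((∀ x y : H, y - x ∈ K → P y - P x ∈ K) →
      ∀ x y : H, (x - P x) + (y - P y) - ((x + y) - P (x + y)) ∈
        {z : H | ∀ w ∈ K, ⟪z, w⟫ ≤ 0}) :=
  have hP : IsMetricProjection K P := hP
  ⟨fun hsub _ _ hxy => hP.sub_isotone_of_subadditive hconv hcone hsub hxy,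
    fun hiso x y => hP.sub_subadditive_of_isotone hconv hcone hiso x y⟩

theorem stmt19 {H : Type*} [NormedAddCommGroup H] [InnerProductSpace ℝ H] [CompleteSpace H]
    [TopologicalSpace.SeparableSpace H]
    (K : Set H) (hK : IsClosed K) (hconv : Convex ℝ K)
    (hcone : ∀ t : ℝ, 0 ≤ t → ∀ x ∈ K, t • x ∈ K)
    (hgen : ∀ z : H, ∃ a ∈ K, ∃ b ∈ K, z = a - b)
    (P : H → H) (hP : ∀ x, P x ∈ K ∧ ∀ y ∈ K, ‖x - P x‖ ≤ ‖x - y‖) :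
    ((∀ x y : H, P x + P y - P (x + y) ∈ K) →
      ∀ x y : H, y - x ∈ {z : H | ∀ w ∈ K, ⟪z, w⟫ ≤ 0} →
        (y - P y) - (x - P x) ∈ {z : H | ∀ w ∈ K, ⟪z, w⟫ ≤ 0}) ∧
    ((∀ x y : H, y - x ∈ K → P y - P x ∈ K) →
      ∀ x y : H, (x - P x) + (y - P y) - ((x + y) - P (x + y)) ∈
        {z : H | ∀ w ∈ K, ⟪z, w⟫ ≤ 0}) :=
  stmt19_general K hconv hcone P hP
end
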